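/- Discrete compatibility of the shear stress terms: for real numbers v_i^ℓ, v_i^{ℓ+1}, α_{ik}^ℓ, α_{ik}^{ℓ+1}, A_{im}^ℓ, A_{im}^{ℓ+1} (i,k,m ∈ {1,2,3}), define A_{im}^{ℓ+1/2} = (A_{im}^{ℓ+1}+A_{im}^{ℓ})/2, σ_{ik}^ℓ = A_{ji}^ℓ α_{jk}^ℓ (summation over j), σ_{ik}^{ℓ+1} analogously, and σ_{ik}^{ℓ+1/2} = (1/2)(α_{mk}^{ℓ+1}+α_{mk}^ℓ) A_{mi}^{ℓ+1/2}. Then v_i^ℓ(σ_{ik}^{ℓ+1/2} − σ_{ik}^ℓ) + v_i^{ℓ+1}(σ_{ik}^{ℓ+1} − σ_{ik}^{ℓ+1/2}) + (1/2)(α_{ik}^ℓ + α_{ik}^{ℓ+1}) A_{im}^{ℓ+1/2} (v_m^{ℓ+1} − v_m^ℓ) = v_i^{ℓ+1} σ_{ik}^{ℓ+1} − v_i^ℓ σ_{ik}^ℓ for each fixed k, with summation over repeated indices i, m. -/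
import Mathlib


/-- Discrete compatibility of the shear stress terms in the HTC scheme. -/
theorem shear_stress_compatibility
    (v0 v1 : Fin 3 → ℝ) (α0 α1 A0 A1 : Fin 3 → Fin 3 → ℝ) (k : Fin 3) :
    let Ah : Fin 3 → Fin 3 → ℝ := fun i m => (A1 i m + A0 i m) / 2
    let σ0 : Fin 3 → Fin 3 → ℝ := fun i k => ∑ j, A0 j i * α0 j k
    let σ1 : Fin 3 → Fin 3 → ℝ := fun i k => ∑ j, A1 j i * α1 j k
    let σh : Fin 3 → Fin 3 → ℝ := fun i k => ∑ m, (1 / 2) * (α1 m k + α0 m k) * Ah m i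
    (∑ i, v0 i * (σh i k - σ0 i k)) + (∑ i, v1 i * (σ1 i k - σh i k))
      + (∑ i, ∑ m, (1 / 2) * (α0 i k + α1 i k) * Ah i m * (v1 m - v0 m))
      = ∑ i, (v1 i * σ1 i k - v0 i * σ0 i k) := by
  intro Ah σ0 σ1 σh
  simp only [Ah, σ0, σ1, σh, Fin.sum_univ_three]
  ring
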